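/- arXiv:1809.09268 — 3 statements merged into one kernel-verified Lean document; each statement's English description precedes it below -/
import Mathlib

section
/- Let γ : ℝ → (0,∞) be continuous and suppose γ(X) has a continuous (atomless) distribution. Fix constants c > 0, r ≥ 0, λ ∈ [0,1] and define g(x) := x·𝟙_{γ(x)>c} + (x ∧ r)·𝟙_{γ(x)<c} + ((1−λ)x + λ(x ∧ r))·𝟙_{γ(x)=c}. Then for every sequence (Z_n) of integrable random variables with 𝔼[|Z_n − X|] → 0, one has 𝔼[|g(Z_n) − g(X)|] → 0 and consequently ES_p(g(Z_n)) → ES_p(g(X)); i.e. the map Z ↦ ES_p(g(Z)) is continuous at Z = X with respect to the L¹ metric. -/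
open MeasureTheory Filter
open scoped ENNReal Topology Classical

noncomputable def VaR {Ω : Type*} [MeasurableSpace Ω] (P : Measure Ω) (p : ℝ) (Y : Ω → ℝ) : ℝ :=
  sInf {x : ℝ | p ≤ (P {ω | Y ω ≤ x}).toReal}

noncomputable def ES {Ω : Type*} [MeasurableSpace Ω] (P : Measure Ω) (p : ℝ) (Y : Ω → ℝ) : ℝ :=
  (1 - p)⁻¹ * ∫ u in p..(1 : ℝ), VaR P u Y

/-- The probability space is atomless. -/
def Atomless {Ω : Type*} [MeasurableSpace Ω] (P : Measure Ω) : Prop :=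
  ∀ s : Set Ω, MeasurableSet s → 0 < P s →
    ∃ t, t ⊆ s ∧ MeasurableSet t ∧ 0 < P t ∧ P t < P s

/-- The (topological) support of a measure on ℝ. -/
def msupport (μ : Measure ℝ) : Set ℝ :=
  {x | ∀ ε > 0, 0 < μ (Set.Ioo (x - ε) (x + ε))}

/-- The distribution `μ` has a density (w.r.t. Lebesgue measure) which is positive
on the support of `μ`. -/
def HasPositiveDensityOnSupport (μ : Measure ℝ) : Prop :=
  ∃ f : ℝ → ℝ, Measurable f ∧
    μ = MeasureTheory.volume.withDensity (fun x => ENNReal.ofReal (f x)) ∧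
    ∀ x ∈ msupport μ, 0 < f x

/-- The distribution `μ` has a density (w.r.t. Lebesgue measure) which is decreasing
(and positive) on the support of `μ`. -/
def HasDecreasingDensityOnSupport (μ : Measure ℝ) : Prop :=
  ∃ f : ℝ → ℝ, Measurable f ∧
    μ = MeasureTheory.volume.withDensity (fun x => ENNReal.ofReal (f x)) ∧
    AntitoneOn f (msupport μ) ∧ ∀ x ∈ msupport μ, 0 < f x

/-- Membership in the admissible set 𝒢_cm (complete market): measurable `g` with
budget constraint `𝔼[γ(X)·g(X)] ≥ x₀`. -/
def memGcm {Ω : Type*} [MeasurableSpace Ω] (P : Measure Ω) (X : Ω → ℝ) (γ : ℝ → ℝ)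
    (x₀ : ℝ) (g : ℝ → ℝ) : Prop :=
  Measurable g ∧ Integrable (fun ω => γ (X ω) * g (X ω)) P ∧
    x₀ ≤ ∫ ω, γ (X ω) * g (X ω) ∂P

/-- Membership in the admissible set 𝒢_ns (no short-selling):
`𝔼[γ(X)·g(X)] ≥ x₀` and `0 ≤ g(X) ≤ X` a.s. -/
def memGns {Ω : Type*} [MeasurableSpace Ω] (P : Measure Ω) (X : Ω → ℝ) (γ : ℝ → ℝ)
    (x₀ : ℝ) (g : ℝ → ℝ) : Prop :=
  Measurable g ∧ Integrable (fun ω => γ (X ω) * g (X ω)) P ∧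
    x₀ ≤ ∫ ω, γ (X ω) * g (X ω) ∂P ∧
    (∀ᵐ ω ∂P, 0 ≤ g (X ω) ∧ g (X ω) ≤ X ω)

/-- Membership in the admissible set 𝒢_bd (bounded positions):
`𝔼[γ(X)·g(X)] ≥ x₀` and `0 ≤ g(X) ≤ m` a.s. -/
def memGbd {Ω : Type*} [MeasurableSpace Ω] (P : Measure Ω) (X : Ω → ℝ) (γ : ℝ → ℝ)
    (x₀ m : ℝ) (g : ℝ → ℝ) : Prop :=
  Measurable g ∧ Integrable (fun ω => γ (X ω) * g (X ω)) P ∧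
    x₀ ≤ ∫ ω, γ (X ω) * g (X ω) ∂P ∧
    (∀ᵐ ω ∂P, 0 ≤ g (X ω) ∧ g (X ω) ≤ m)

noncomputable def cdfR (ν : Measure ℝ) (x : ℝ) : ℝ := (ν (Set.Iic x)).toReal

noncomputable def ql (ν : Measure ℝ) (u : ℝ) : ℝ := sInf {x | u ≤ cdfR ν x}

section quant
variable (ν : Measure ℝ) [IsProbabilityMeasure ν]

lemma cdfR_mono : Monotone (cdfR ν) := fun a b hab =>
  ENNReal.toReal_mono (measure_ne_top _ _) (measure_mono (Set.Iic_subset_Iic.2 hab))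

lemma cdfR_right_cont {u x : ℝ} (h : ∀ ε > 0, u ≤ cdfR ν (x + ε)) : u ≤ cdfR ν x := by
  have hI : ⋂ n : ℕ, Set.Iic (x + 1/(n+1)) = Set.Iic x := by
    ext y
    simp only [Set.mem_iInter, Set.mem_Iic]
    constructor
    · intro h
      by_contra hy
      push_neg at hy
      obtain ⟨n, hn⟩ := exists_nat_one_div_lt (sub_pos.2 hy)
      have := h n
      push_cast at hn this
      linarith
    · intro h n
      have : (0:ℝ) < 1/(n+1) := by positivity
      linarith
  have hseq : Tendsto (fun n : ℕ => ν (Set.Iic (x + 1/(n+1)))) atTop (𝓝 (ν (Set.Iic x))) := by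
    have := tendsto_measure_iInter_atTop (μ := ν) (s := fun n : ℕ => Set.Iic (x + 1/(n+1)))
      (fun n => measurableSet_Iic.nullMeasurableSet)
      (fun a b hab => Set.Iic_subset_Iic.2 (by
        have : (1:ℝ)/(b+1) ≤ 1/(a+1) := by
          apply one_div_le_one_div_of_le (by positivity)
          exact_mod_cast add_le_add_left (Nat.cast_le.2 hab) 1
        linarith))
      ⟨0, measure_ne_top _ _⟩
    rwa [hI] at this
  have htr := (ENNReal.tendsto_toReal (measure_ne_top ν (Set.Iic x))).comp hseq
  exact ge_of_tendsto' htr (fun n => h (1/((n:ℝ)+1)) (by positivity))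

lemma exists_cdfR_lt {u : ℝ} (hu : 0 < u) : ∃ y, cdfR ν y < u := by
  have hI : ⋂ n : ℕ, Set.Iic (-(n:ℝ)) = ∅ := by
    ext y
    simp only [Set.mem_iInter, Set.mem_Iic, Set.mem_empty_iff_false, iff_false, not_forall]
    obtain ⟨n, hn⟩ := exists_nat_gt (-y)
    exact ⟨n, by push_neg; linarith⟩
  have hseq : Tendsto (fun n : ℕ => ν (Set.Iic (-(n:ℝ)))) atTop (𝓝 0) := by
    have := tendsto_measure_iInter_atTop (μ := ν) (s := fun n : ℕ => Set.Iic (-(n:ℝ)))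
      (fun n => measurableSet_Iic.nullMeasurableSet)
      (fun a b hab => Set.Iic_subset_Iic.2 (by exact_mod_cast neg_le_neg (Nat.cast_le.2 hab)))
      ⟨0, measure_ne_top _ _⟩
    rwa [hI, measure_empty] at this
  have htr := (ENNReal.tendsto_toReal (by simp : (0:ℝ≥0∞) ≠ ∞)).comp hseq
  simp only [ENNReal.toReal_zero, Function.comp] at htr
  obtain ⟨n, hn⟩ := (htr.eventually_lt_const hu).exists
  exact ⟨-(n:ℝ), hn⟩

lemma exists_le_cdfR {u : ℝ} (hu : u < 1) : ∃ y, u ≤ cdfR ν y := by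
  have hseq : Tendsto (fun n : ℕ => ν (Set.Iic (n:ℝ))) atTop (𝓝 1) := by
    have hU : ⋃ n : ℕ, Set.Iic ((n:ℝ)) = Set.univ := by
      ext y
      simp only [Set.mem_iUnion, Set.mem_Iic, Set.mem_univ, iff_true]
      obtain ⟨n, hn⟩ := exists_nat_gt y
      exact ⟨n, hn.le⟩
    have := tendsto_measure_iUnion_atTop (μ := ν) (s := fun n : ℕ => Set.Iic ((n:ℝ)))
      (fun a b hab => Set.Iic_subset_Iic.2 (Nat.cast_le.2 hab))
    rwa [hU, measure_univ] at this
  have htr := (ENNReal.tendsto_toReal (by simp : (1:ℝ≥0∞) ≠ ∞)).comp hseq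
  simp only [ENNReal.toReal_one, Function.comp] at htr
  obtain ⟨n, hn⟩ := (htr.eventually_const_lt hu).exists
  exact ⟨(n:ℝ), hn.le⟩

lemma bddBelow_ql_set {u : ℝ} (hu : 0 < u) : BddBelow {x | u ≤ cdfR ν x} := by
  obtain ⟨y, hy⟩ := exists_cdfR_lt ν hu
  refine ⟨y, fun z hz => ?_⟩
  by_contra hzy
  push_neg at hzy
  exact absurd (le_trans hz (cdfR_mono ν hzy.le)) (not_le.2 hy)

lemma nonempty_ql_set {u : ℝ} (hu : u < 1) : Set.Nonempty {x | u ≤ cdfR ν x} :=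
  (exists_le_cdfR ν hu).imp (fun _ h => h)

lemma ql_le_iff {u x : ℝ} (hu0 : 0 < u) (hu1 : u < 1) :
    ql ν u ≤ x ↔ u ≤ cdfR ν x := by
  constructor
  · intro h
    apply cdfR_right_cont ν
    intro ε hε
    have hlt : sInf {x | u ≤ cdfR ν x} < x + ε := lt_of_le_of_lt h (by linarith)
    obtain ⟨z, hz, hz2⟩ := (csInf_lt_iff (bddBelow_ql_set ν hu0) (nonempty_ql_set ν hu1)).1 hlt
    exact le_trans hz (cdfR_mono ν hz2.le)
  · intro h
    exact csInf_le (bddBelow_ql_set ν hu0) h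

lemma ql_mono {u v : ℝ} (hu : 0 < u) (hv : v < 1) (huv : u ≤ v) : ql ν u ≤ ql ν v :=
  csInf_le_csInf (bddBelow_ql_set ν hu) (nonempty_ql_set ν hv)
    (fun _ hx => le_trans huv hx)

end quant

lemma slice_swap {α : Type*} [MeasurableSpace α] (μ : Measure α) [SFinite μ]
    (ν : Measure ℝ) [SFinite ν] {A : Set (α × ℝ)} (hA : MeasurableSet A) :
    ∫⁻ a, ν {x | (a, x) ∈ A} ∂μ = ∫⁻ x, μ {a | (a, x) ∈ A} ∂ν := by
  have h1 : ∫⁻ a, ν {x | (a, x) ∈ A} ∂μ = ∫⁻ a, ν (Prod.mk a ⁻¹' A) ∂μ := rfl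
  have h2 : ∫⁻ x, μ {a | (a, x) ∈ A} ∂ν = ∫⁻ x, μ ((fun a => (a, x)) ⁻¹' A) ∂ν := rfl
  rw [h1, h2, ← Measure.prod_apply hA, Measure.prod_apply_symm hA]

lemma ofReal_add_ofReal_neg (a : ℝ) :
    ENNReal.ofReal a + ENNReal.ofReal (-a) = ENNReal.ofReal |a| := by
  rcases le_total 0 a with h | h
  · rw [ENNReal.ofReal_of_nonpos (neg_nonpos.2 h), add_zero, abs_of_nonneg h]
  · rw [ENNReal.ofReal_of_nonpos h, zero_add, abs_of_nonpos h]

lemma lintegral_abs_ql_le (μ ν : Measure ℝ) [IsProbabilityMeasure μ] [IsProbabilityMeasure ν] :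
    ∫⁻ u in Set.Ioo (0:ℝ) 1, ENNReal.ofReal |ql μ u - ql ν u| ≤
      ∫⁻ x, ENNReal.ofReal |cdfR μ x - cdfR ν x| := by
  set A : Set (ℝ × ℝ) := {q | q.1 ≤ cdfR μ q.2 ∧ cdfR ν q.2 < q.1} with hA
  set B : Set (ℝ × ℝ) := {q | q.1 ≤ cdfR ν q.2 ∧ cdfR μ q.2 < q.1} with hB
  have hAm : MeasurableSet A :=
    (measurableSet_le measurable_fst ((cdfR_mono μ).measurable.comp measurable_snd)).inter
      (measurableSet_lt ((cdfR_mono ν).measurable.comp measurable_snd) measurable_fst)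
  have hBm : MeasurableSet B :=
    (measurableSet_le measurable_fst ((cdfR_mono ν).measurable.comp measurable_snd)).inter
      (measurableSet_lt ((cdfR_mono μ).measurable.comp measurable_snd) measurable_fst)
  have step1 : ∫⁻ u in Set.Ioo (0:ℝ) 1, ENNReal.ofReal |ql μ u - ql ν u|
      ≤ ∫⁻ u in Set.Ioo (0:ℝ) 1,
          (volume {x | (u, x) ∈ A} + volume {x | (u, x) ∈ B}) := by
    apply lintegral_mono_ae
    rw [ae_restrict_iff' measurableSet_Ioo]
    apply ae_of_all
    intro u hu
    have e1 : {x | (u, x) ∈ A} = Set.Ico (ql μ u) (ql ν u) := by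
      ext x
      simp only [hA, Set.mem_setOf_eq, Set.mem_Ico]
      constructor
      · rintro ⟨h1, h2⟩
        exact ⟨(ql_le_iff μ hu.1 hu.2).2 h1,
          not_le.1 fun hc => absurd ((ql_le_iff ν hu.1 hu.2).1 hc) (not_le.2 h2)⟩
      · rintro ⟨h1, h2⟩
        exact ⟨(ql_le_iff μ hu.1 hu.2).1 h1,
          not_le.1 fun hc => absurd ((ql_le_iff ν hu.1 hu.2).2 hc) (not_le.2 h2)⟩
    have e2 : {x | (u, x) ∈ B} = Set.Ico (ql ν u) (ql μ u) := by
      ext x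
      simp only [hB, Set.mem_setOf_eq, Set.mem_Ico]
      constructor
      · rintro ⟨h1, h2⟩
        exact ⟨(ql_le_iff ν hu.1 hu.2).2 h1,
          not_le.1 fun hc => absurd ((ql_le_iff μ hu.1 hu.2).1 hc) (not_le.2 h2)⟩
      · rintro ⟨h1, h2⟩
        exact ⟨(ql_le_iff ν hu.1 hu.2).1 h1,
          not_le.1 fun hc => absurd ((ql_le_iff μ hu.1 hu.2).2 hc) (not_le.2 h2)⟩
    rw [e1, e2, Real.volume_Ico, Real.volume_Ico]
    have := ofReal_add_ofReal_neg (ql μ u - ql ν u)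
    rw [neg_sub] at this
    rw [add_comm, this]
  have hsplit : ∫⁻ u in Set.Ioo (0:ℝ) 1,
        (volume {x | (u, x) ∈ A} + volume {x | (u, x) ∈ B})
      = (∫⁻ u in Set.Ioo (0:ℝ) 1, volume {x | (u, x) ∈ A})
        + ∫⁻ u in Set.Ioo (0:ℝ) 1, volume {x | (u, x) ∈ B} :=
    lintegral_add_left (measurable_measure_prodMk_left hAm) _
  have hswapA := slice_swap (volume.restrict (Set.Ioo (0:ℝ) 1)) volume hAm
  have hswapB := slice_swap (volume.restrict (Set.Ioo (0:ℝ) 1)) volume hBm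
  have hboundA : ∫⁻ x, (volume.restrict (Set.Ioo (0:ℝ) 1)) {u | (u, x) ∈ A} ∂volume
      ≤ ∫⁻ x, ENNReal.ofReal (cdfR μ x - cdfR ν x) ∂volume := by
    apply lintegral_mono
    intro x
    show (volume.restrict (Set.Ioo (0:ℝ) 1)) {u | (u, x) ∈ A} ≤ _
    have : {u | (u, x) ∈ A} = Set.Ioc (cdfR ν x) (cdfR μ x) := by
      ext u; simp only [hA, Set.mem_setOf_eq, Set.mem_Ioc, and_comm]
    rw [this]
    exact (Measure.restrict_apply_le _ _).trans (le_of_eq (Real.volume_Ioc))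
  have hboundB : ∫⁻ x, (volume.restrict (Set.Ioo (0:ℝ) 1)) {u | (u, x) ∈ B} ∂volume
      ≤ ∫⁻ x, ENNReal.ofReal (cdfR ν x - cdfR μ x) ∂volume := by
    apply lintegral_mono
    intro x
    show (volume.restrict (Set.Ioo (0:ℝ) 1)) {u | (u, x) ∈ B} ≤ _
    have : {u | (u, x) ∈ B} = Set.Ioc (cdfR μ x) (cdfR ν x) := by
      ext u; simp only [hB, Set.mem_setOf_eq, Set.mem_Ioc, and_comm]
    rw [this]
    exact (Measure.restrict_apply_le _ _).trans (le_of_eq (Real.volume_Ioc))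
  have hcomb : (∫⁻ x, ENNReal.ofReal (cdfR μ x - cdfR ν x) ∂volume)
      + ∫⁻ x, ENNReal.ofReal (cdfR ν x - cdfR μ x) ∂volume
      = ∫⁻ x, ENNReal.ofReal |cdfR μ x - cdfR ν x| ∂volume := by
    rw [← lintegral_add_left (f := fun x => ENNReal.ofReal (cdfR μ x - cdfR ν x)) (((cdfR_mono μ).measurable.sub (cdfR_mono ν).measurable).ennreal_ofReal)]
    apply lintegral_congr
    intro x
    have := ofReal_add_ofReal_neg (cdfR μ x - cdfR ν x)
    rw [neg_sub] at this
    exact this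
  calc ∫⁻ u in Set.Ioo (0:ℝ) 1, ENNReal.ofReal |ql μ u - ql ν u|
      ≤ _ := step1
    _ = _ := hsplit
    _ ≤ _ := by rw [hswapA, hswapB]; exact add_le_add hboundA hboundB
    _ = _ := hcomb

lemma lintegral_abs_cdfR_le {Ω : Type*} [MeasurableSpace Ω] (P : Measure Ω)
    [IsProbabilityMeasure P] {Y1 Y2 : Ω → ℝ} (h1 : Measurable Y1) (h2 : Measurable Y2) :
    ∫⁻ x, ENNReal.ofReal |cdfR (P.map Y1) x - cdfR (P.map Y2) x|
      ≤ ∫⁻ ω, ENNReal.ofReal |Y1 ω - Y2 ω| ∂P := by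
  set A : Set (Ω × ℝ) := {q | Y1 q.1 ≤ q.2 ∧ q.2 < Y2 q.1} with hA
  set B : Set (Ω × ℝ) := {q | Y2 q.1 ≤ q.2 ∧ q.2 < Y1 q.1} with hB
  have hAm : MeasurableSet A :=
    (measurableSet_le (h1.comp measurable_fst) measurable_snd).inter
      (measurableSet_lt measurable_snd (h2.comp measurable_fst))
  have hBm : MeasurableSet B :=
    (measurableSet_le (h2.comp measurable_fst) measurable_snd).inter
      (measurableSet_lt measurable_snd (h1.comp measurable_fst))
  have key : ∀ x : ℝ, ENNReal.ofReal |cdfR (P.map Y1) x - cdfR (P.map Y2) x|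
      ≤ P {ω | (ω, x) ∈ A} + P {ω | (ω, x) ∈ B} := by
    intro x
    have e1 : cdfR (P.map Y1) x = (P {ω | Y1 ω ≤ x}).toReal := by
      rw [cdfR, Measure.map_apply h1 measurableSet_Iic]; rfl
    have e2 : cdfR (P.map Y2) x = (P {ω | Y2 ω ≤ x}).toReal := by
      rw [cdfR, Measure.map_apply h2 measurableSet_Iic]; rfl
    have hsub1 : {ω | Y1 ω ≤ x} ⊆ {ω | Y2 ω ≤ x} ∪ {ω | (ω, x) ∈ A} := by
      intro ω hω
      rcases le_or_gt (Y2 ω) x with h | h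
      · exact Or.inl h
      · exact Or.inr ⟨hω, h⟩
    have hsub2 : {ω | Y2 ω ≤ x} ⊆ {ω | Y1 ω ≤ x} ∪ {ω | (ω, x) ∈ B} := by
      intro ω hω
      rcases le_or_gt (Y1 ω) x with h | h
      · exact Or.inl h
      · exact Or.inr ⟨hω, h⟩
    have hb1 : cdfR (P.map Y1) x - cdfR (P.map Y2) x ≤ (P {ω | (ω, x) ∈ A}).toReal := by
      rw [e1, e2]
      have hle : P {ω | Y1 ω ≤ x} ≤ P {ω | Y2 ω ≤ x} + P {ω | (ω, x) ∈ A} :=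
        (measure_mono hsub1).trans (measure_union_le _ _)
      have h' := ENNReal.toReal_mono
        (ENNReal.add_ne_top.2 ⟨measure_ne_top _ _, measure_ne_top _ _⟩) hle
      rw [ENNReal.toReal_add (measure_ne_top _ _) (measure_ne_top _ _)] at h'
      linarith
    have hb2 : cdfR (P.map Y2) x - cdfR (P.map Y1) x ≤ (P {ω | (ω, x) ∈ B}).toReal := by
      rw [e1, e2]
      have hle : P {ω | Y2 ω ≤ x} ≤ P {ω | Y1 ω ≤ x} + P {ω | (ω, x) ∈ B} :=
        (measure_mono hsub2).trans (measure_union_le _ _)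
      have h' := ENNReal.toReal_mono
        (ENNReal.add_ne_top.2 ⟨measure_ne_top _ _, measure_ne_top _ _⟩) hle
      rw [ENNReal.toReal_add (measure_ne_top _ _) (measure_ne_top _ _)] at h'
      linarith
    have habs : |cdfR (P.map Y1) x - cdfR (P.map Y2) x|
        ≤ (P {ω | (ω, x) ∈ A}).toReal + (P {ω | (ω, x) ∈ B}).toReal := by
      have n1 : (0:ℝ) ≤ (P {ω | (ω, x) ∈ A}).toReal := ENNReal.toReal_nonneg
      have n2 : (0:ℝ) ≤ (P {ω | (ω, x) ∈ B}).toReal := ENNReal.toReal_nonneg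
      apply abs_le.2
      constructor <;> linarith
    calc ENNReal.ofReal |cdfR (P.map Y1) x - cdfR (P.map Y2) x|
        ≤ ENNReal.ofReal ((P {ω | (ω, x) ∈ A}).toReal + (P {ω | (ω, x) ∈ B}).toReal) :=
          ENNReal.ofReal_le_ofReal habs
      _ = P {ω | (ω, x) ∈ A} + P {ω | (ω, x) ∈ B} := by
          rw [ENNReal.ofReal_add ENNReal.toReal_nonneg ENNReal.toReal_nonneg,
            ENNReal.ofReal_toReal (measure_ne_top _ _), ENNReal.ofReal_toReal (measure_ne_top _ _)]
  calc ∫⁻ x, ENNReal.ofReal |cdfR (P.map Y1) x - cdfR (P.map Y2) x|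
      ≤ ∫⁻ x, (P {ω | (ω, x) ∈ A} + P {ω | (ω, x) ∈ B}) := lintegral_mono key
    _ = (∫⁻ x, P {ω | (ω, x) ∈ A}) + ∫⁻ x, P {ω | (ω, x) ∈ B} :=
        lintegral_add_left (measurable_measure_prodMk_right hAm) _
    _ = (∫⁻ ω, volume {x | (ω, x) ∈ A} ∂P) + ∫⁻ ω, volume {x | (ω, x) ∈ B} ∂P := by
        rw [slice_swap P volume hAm, slice_swap P volume hBm]
    _ = ∫⁻ ω, (volume {x | (ω, x) ∈ A} + volume {x | (ω, x) ∈ B}) ∂P :=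
        (lintegral_add_left (measurable_measure_prodMk_left hAm) _).symm
    _ = ∫⁻ ω, ENNReal.ofReal |Y1 ω - Y2 ω| ∂P := by
        apply lintegral_congr
        intro ω
        have e1 : {x | (ω, x) ∈ A} = Set.Ico (Y1 ω) (Y2 ω) := rfl
        have e2 : {x | (ω, x) ∈ B} = Set.Ico (Y2 ω) (Y1 ω) := rfl
        rw [e1, e2, Real.volume_Ico, Real.volume_Ico]
        have h := ofReal_add_ofReal_neg (Y2 ω - Y1 ω)
        rw [neg_sub] at h
        rw [h, abs_sub_comm]

lemma lintegral_ofReal_abs_ne_top {Ω : Type*} [MeasurableSpace Ω] {P : Measure Ω} {f : Ω → ℝ}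
    (hf : Integrable f P) : ∫⁻ ω, ENNReal.ofReal |f ω| ∂P ≠ ∞ := by
  have h2 := hf.2
  rw [HasFiniteIntegral] at h2
  simp_rw [← Real.enorm_eq_ofReal_abs]
  exact h2.ne

lemma lintegral_ql_sub_ne_top (ν : Measure ℝ) [IsProbabilityMeasure ν]
    (hν : ∫⁻ y, ENNReal.ofReal |y| ∂ν ≠ ∞) {p : ℝ} (hp0 : 0 < p) (hp1 : p < 1) :
    ∫⁻ u in Set.Ioo p 1, ENNReal.ofReal (ql ν u - ql ν p) ≠ ∞ := by
  set m := ql ν p with hm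
  set A : Set (ℝ × ℝ) := {q | m ≤ q.2 ∧ cdfR ν q.2 < q.1} with hA
  have hAm : MeasurableSet A :=
    (measurableSet_le measurable_const measurable_snd).inter
      (measurableSet_lt ((cdfR_mono ν).measurable.comp measurable_snd) measurable_fst)
  have step1 : ∫⁻ u in Set.Ioo p 1, ENNReal.ofReal (ql ν u - m)
      ≤ ∫⁻ u in Set.Ioo p 1, volume {x | (u, x) ∈ A} := by
    apply lintegral_mono_ae
    rw [ae_restrict_iff' measurableSet_Ioo]
    apply ae_of_all
    intro u hu
    have hu0 : 0 < u := hp0.trans hu.1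
    have e1 : {x | (u, x) ∈ A} = Set.Ico m (ql ν u) := by
      ext x
      simp only [hA, Set.mem_setOf_eq, Set.mem_Ico]
      constructor
      · rintro ⟨hx1, hx2⟩
        exact ⟨hx1, not_le.1 fun hc => absurd ((ql_le_iff ν hu0 hu.2).1 hc) (not_le.2 hx2)⟩
      · rintro ⟨hx1, hx2⟩
        exact ⟨hx1, not_le.1 fun hc => absurd ((ql_le_iff ν hu0 hu.2).2 hc) (not_le.2 hx2)⟩
    rw [e1, Real.volume_Ico]
  have step2 := slice_swap (volume.restrict (Set.Ioo p 1)) volume hAm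
  have step3 : ∫⁻ x, (volume.restrict (Set.Ioo p 1)) {u | (u, x) ∈ A} ∂volume
      ≤ ∫⁻ x, (Set.Ici m).indicator (fun x => ν (Set.Ioi x)) x ∂volume := by
    apply lintegral_mono
    intro x
    show (volume.restrict (Set.Ioo p 1)) {u | (u, x) ∈ A} ≤ _
    rcases le_or_gt m x with hx | hx
    · rw [Set.indicator_of_mem (show x ∈ Set.Ici m from hx)]
      have e : {u | (u, x) ∈ A} = Set.Ioi (cdfR ν x) := by
        ext u; simp only [hA, Set.mem_setOf_eq, Set.mem_Ioi, hx, true_and]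
      rw [e, Measure.restrict_apply measurableSet_Ioi]
      have hsub : Set.Ioi (cdfR ν x) ∩ Set.Ioo p 1 ⊆ Set.Ioc (cdfR ν x) 1 :=
        fun y hy => ⟨hy.1, hy.2.2.le⟩
      refine (measure_mono hsub).trans ?_
      rw [Real.volume_Ioc]
      have hsum := measure_add_measure_compl (μ := ν) (measurableSet_Iic (a := x))
      rw [Set.compl_Iic, measure_univ] at hsum
      have h3 : (ν (Set.Iic x)).toReal + (ν (Set.Ioi x)).toReal = 1 := by
        rw [← ENNReal.toReal_add (measure_ne_top _ _) (measure_ne_top _ _), hsum,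
          ENNReal.toReal_one]
      have h4 : 1 - cdfR ν x = (ν (Set.Ioi x)).toReal := by
        rw [cdfR]; linarith
      rw [h4, ENNReal.ofReal_toReal (measure_ne_top _ _)]
    · rw [Set.indicator_of_notMem (show x ∉ Set.Ici m from not_le.2 hx)]
      have e : {u | (u, x) ∈ A} = (∅ : Set ℝ) := by
        ext u
        simp only [hA, Set.mem_setOf_eq, Set.mem_empty_iff_false, iff_false, not_and]
        intro h1
        exact absurd h1 (not_le.2 hx)
      rw [e]
      simp
  have step4 : ∫⁻ x, (Set.Ici m).indicator (fun x => ν (Set.Ioi x)) x ∂volume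
      = ∫⁻ x in Set.Ici m, ν (Set.Ioi x) ∂volume := lintegral_indicator measurableSet_Ici _
  have hBm : MeasurableSet {q : ℝ × ℝ | q.1 < q.2} :=
    measurableSet_lt measurable_fst measurable_snd
  have step5 : ∫⁻ x in Set.Ici m, ν (Set.Ioi x) ∂volume
      = ∫⁻ y, (volume.restrict (Set.Ici m)) (Set.Iio y) ∂ν := by
    have := slice_swap (volume.restrict (Set.Ici m)) ν hBm
    exact this
  have step6 : ∫⁻ y, (volume.restrict (Set.Ici m)) (Set.Iio y) ∂ν
      ≤ ∫⁻ y, (ENNReal.ofReal |y| + ENNReal.ofReal |m|) ∂ν := by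
    apply lintegral_mono
    intro y
    show (volume.restrict (Set.Ici m)) (Set.Iio y) ≤ ENNReal.ofReal |y| + ENNReal.ofReal |m|
    rw [Measure.restrict_apply measurableSet_Iio, Set.Iio_inter_Ici, Real.volume_Ico]
    calc ENNReal.ofReal (y - m) ≤ ENNReal.ofReal (|y| + |m|) :=
          ENNReal.ofReal_le_ofReal (by linarith [le_abs_self y, neg_abs_le m])
      _ = _ := ENNReal.ofReal_add (abs_nonneg y) (abs_nonneg m)
  have step7 : ∫⁻ y, (ENNReal.ofReal |y| + ENNReal.ofReal |m|) ∂ν < ∞ := by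
    rw [lintegral_add_right _ measurable_const, lintegral_const, measure_univ, mul_one]
    exact ENNReal.add_lt_top.2 ⟨hν.lt_top, ENNReal.ofReal_lt_top⟩
  have chain : ∫⁻ u in Set.Ioo p 1, ENNReal.ofReal (ql ν u - m)
      ≤ ∫⁻ y, (ENNReal.ofReal |y| + ENNReal.ofReal |m|) ∂ν := by
    calc ∫⁻ u in Set.Ioo p 1, ENNReal.ofReal (ql ν u - m)
        ≤ ∫⁻ u in Set.Ioo p 1, volume {x | (u, x) ∈ A} := step1
      _ = ∫⁻ x, (volume.restrict (Set.Ioo p 1)) {u | (u, x) ∈ A} ∂volume := step2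
      _ ≤ ∫⁻ x, (Set.Ici m).indicator (fun x => ν (Set.Ioi x)) x ∂volume := step3
      _ = ∫⁻ x in Set.Ici m, ν (Set.Ioi x) ∂volume := step4
      _ = ∫⁻ y, (volume.restrict (Set.Ici m)) (Set.Iio y) ∂ν := step5
      _ ≤ _ := step6
  exact (chain.trans_lt step7).ne

lemma measurable_ql_aux (ν : Measure ℝ) [IsProbabilityMeasure ν] :
    Measurable (fun u => if u ∈ Set.Ioo (0:ℝ) 1 then ql ν u else 0) := by
  apply measurable_of_Iic
  intro x
  by_cases hx : (0:ℝ) ≤ x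
  · have hset : (fun u => if u ∈ Set.Ioo (0:ℝ) 1 then ql ν u else 0) ⁻¹' Set.Iic x
        = (Set.Ioo (0:ℝ) 1 ∩ Set.Iic (cdfR ν x)) ∪ (Set.Ioo (0:ℝ) 1)ᶜ := by
      ext u
      by_cases hu : u ∈ Set.Ioo (0:ℝ) 1
      · simp only [Set.mem_preimage, Set.mem_Iic, if_pos hu, Set.mem_union, Set.mem_inter_iff,
          hu, true_and, Set.mem_compl_iff, not_true_eq_false, or_false]
        exact ql_le_iff ν hu.1 hu.2
      · simp only [Set.mem_preimage, Set.mem_Iic, if_neg hu, Set.mem_union, Set.mem_inter_iff,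
          hu, false_and, Set.mem_compl_iff, not_false_eq_true, or_true, iff_true]
        exact hx
    rw [hset]
    exact (measurableSet_Ioo.inter measurableSet_Iic).union measurableSet_Ioo.compl
  · have hset : (fun u => if u ∈ Set.Ioo (0:ℝ) 1 then ql ν u else 0) ⁻¹' Set.Iic x
        = Set.Ioo (0:ℝ) 1 ∩ Set.Iic (cdfR ν x) := by
      ext u
      by_cases hu : u ∈ Set.Ioo (0:ℝ) 1
      · simp only [Set.mem_preimage, Set.mem_Iic, if_pos hu, Set.mem_inter_iff, hu, true_and]
        exact ql_le_iff ν hu.1 hu.2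
      · simp only [Set.mem_preimage, Set.mem_Iic, if_neg hu, Set.mem_inter_iff, hu, false_and,
          iff_false]
        exact hx
    rw [hset]
    exact measurableSet_Ioo.inter measurableSet_Iic

lemma integrableOn_ql (ν : Measure ℝ) [IsProbabilityMeasure ν]
    (hν : ∫⁻ y, ENNReal.ofReal |y| ∂ν ≠ ∞) {p : ℝ} (hp0 : 0 < p) (hp1 : p < 1) :
    IntegrableOn (ql ν) (Set.Ioo p 1) volume := by
  have hsub : Set.Ioo p 1 ⊆ Set.Ioo (0:ℝ) 1 := Set.Ioo_subset_Ioo hp0.le le_rfl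
  set qt := fun u => if u ∈ Set.Ioo (0:ℝ) 1 then ql ν u else 0 with hqt
  have hqteq : Set.EqOn qt (ql ν) (Set.Ioo p 1) := fun u hu => by
    simp only [hqt, if_pos (hsub hu)]
  have hqtint : IntegrableOn qt (Set.Ioo p 1) volume := by
    constructor
    · exact (measurable_ql_aux ν).aestronglyMeasurable.restrict
    · rw [HasFiniteIntegral]
      have hb : ∀ᵐ u ∂(volume.restrict (Set.Ioo p 1)),
          (‖qt u‖₊ : ℝ≥0∞) ≤ ENNReal.ofReal (ql ν u - ql ν p) + ENNReal.ofReal |ql ν p| := by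
        rw [ae_restrict_iff' measurableSet_Ioo]
        apply ae_of_all
        intro u hu
        have hqtu : qt u = ql ν u := by simp only [hqt, if_pos (hsub hu)]
        rw [hqtu, show ((‖ql ν u‖₊ : ℝ≥0∞)) = ENNReal.ofReal |ql ν u| from Real.enorm_eq_ofReal_abs _]
        have hmle : ql ν p ≤ ql ν u := ql_mono ν hp0 hu.2 hu.1.le
        have habs : |ql ν u| ≤ (ql ν u - ql ν p) + |ql ν p| := by
          apply abs_le.2
          constructor <;> linarith [le_abs_self (ql ν p), neg_abs_le (ql ν p)]
        calc ENNReal.ofReal |ql ν u| ≤ ENNReal.ofReal ((ql ν u - ql ν p) + |ql ν p|) :=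
              ENNReal.ofReal_le_ofReal habs
          _ = _ := ENNReal.ofReal_add (by linarith) (abs_nonneg _)
      calc ∫⁻ u in Set.Ioo p 1, (‖qt u‖₊ : ℝ≥0∞)
          ≤ ∫⁻ u in Set.Ioo p 1,
              (ENNReal.ofReal (ql ν u - ql ν p) + ENNReal.ofReal |ql ν p|) :=
            lintegral_mono_ae hb
        _ = (∫⁻ u in Set.Ioo p 1, ENNReal.ofReal (ql ν u - ql ν p))
            + ENNReal.ofReal |ql ν p| * volume (Set.Ioo p 1) := by
            rw [lintegral_add_right _ measurable_const, setLIntegral_const]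
        _ < ∞ := by
            apply ENNReal.add_lt_top.2
            constructor
            · exact (lintegral_ql_sub_ne_top ν hν hp0 hp1).lt_top
            · rw [Real.volume_Ioo]
              exact ENNReal.mul_lt_top ENNReal.ofReal_lt_top ENNReal.ofReal_lt_top
  exact hqtint.congr_fun hqteq measurableSet_Ioo

lemma VaR_eq_ql {Ω : Type*} [MeasurableSpace Ω] (P : Measure Ω) {Y : Ω → ℝ}
    (hY : Measurable Y) (u : ℝ) : VaR P u Y = ql (P.map Y) u := by
  rw [VaR, ql]
  congr 1
  ext x
  simp only [Set.mem_setOf_eq, cdfR, Measure.map_apply hY measurableSet_Iic]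
  rfl

lemma abs_ES_sub_ES_le {Ω : Type*} [MeasurableSpace Ω] (P : Measure Ω) [IsProbabilityMeasure P]
    {Y1 Y2 : Ω → ℝ} (h1m : Measurable Y1) (h2m : Measurable Y2)
    (h1i : Integrable Y1 P) (h2i : Integrable Y2 P) {p : ℝ} (hp0 : 0 < p) (hp1 : p < 1) :
    |ES P p Y1 - ES P p Y2| ≤ (1 - p)⁻¹ * ∫ ω, |Y1 ω - Y2 ω| ∂P := by
  haveI i1 : IsProbabilityMeasure (P.map Y1) := Measure.isProbabilityMeasure_map h1m.aemeasurable
  haveI i2 : IsProbabilityMeasure (P.map Y2) := Measure.isProbabilityMeasure_map h2m.aemeasurable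
  have habsm : Measurable (fun y : ℝ => ENNReal.ofReal |y|) :=
    continuous_abs.measurable.ennreal_ofReal
  have hν1 : ∫⁻ y, ENNReal.ofReal |y| ∂(P.map Y1) ≠ ∞ := by
    rw [lintegral_map habsm h1m]
    exact lintegral_ofReal_abs_ne_top h1i
  have hν2 : ∫⁻ y, ENNReal.ofReal |y| ∂(P.map Y2) ≠ ∞ := by
    rw [lintegral_map habsm h2m]
    exact lintegral_ofReal_abs_ne_top h2i
  have hi1 := integrableOn_ql (P.map Y1) hν1 hp0 hp1
  have hi2 := integrableOn_ql (P.map Y2) hν2 hp0 hp1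
  have hES : ∀ (Y : Ω → ℝ), Measurable Y →
      ES P p Y = (1 - p)⁻¹ * ∫ u in Set.Ioo p 1, ql (P.map Y) u := by
    intro Y hY
    rw [ES]
    congr 1
    calc ∫ u in p..(1:ℝ), VaR P u Y
        = ∫ u in Set.Ioc p 1, VaR P u Y := intervalIntegral.integral_of_le hp1.le
      _ = ∫ u in Set.Ioc p 1, ql (P.map Y) u := by simp only [VaR_eq_ql P hY]
      _ = ∫ u in Set.Ioo p 1, ql (P.map Y) u := MeasureTheory.integral_Ioc_eq_integral_Ioo
  rw [hES Y1 h1m, hES Y2 h2m, ← mul_sub, abs_mul,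
    abs_of_nonneg (inv_nonneg.2 (by linarith : (0:ℝ) ≤ 1 - p))]
  apply mul_le_mul_of_nonneg_left _ (inv_nonneg.2 (by linarith : (0:ℝ) ≤ 1 - p))
  rw [← integral_sub hi1 hi2]
  have habs : |∫ u in Set.Ioo p 1, (ql (P.map Y1) u - ql (P.map Y2) u)|
      ≤ ∫ u in Set.Ioo p 1, |ql (P.map Y1) u - ql (P.map Y2) u| := by
    have := norm_integral_le_integral_norm (μ := volume.restrict (Set.Ioo p 1))
      (f := fun u => ql (P.map Y1) u - ql (P.map Y2) u)
    simpa [Real.norm_eq_abs] using this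
  refine habs.trans ?_
  have hsubint : Integrable (fun u => |ql (P.map Y1) u - ql (P.map Y2) u|)
      (volume.restrict (Set.Ioo p 1)) := (hi1.sub hi2).abs
  rw [MeasureTheory.integral_eq_lintegral_of_nonneg_ae (ae_of_all _ fun u => abs_nonneg _)
    hsubint.aestronglyMeasurable]
  have hchain : ∫⁻ u in Set.Ioo p 1, ENNReal.ofReal |ql (P.map Y1) u - ql (P.map Y2) u|
      ≤ ENNReal.ofReal (∫ ω, |Y1 ω - Y2 ω| ∂P) := by
    calc ∫⁻ u in Set.Ioo p 1, ENNReal.ofReal |ql (P.map Y1) u - ql (P.map Y2) u|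
        ≤ ∫⁻ u in Set.Ioo (0:ℝ) 1, ENNReal.ofReal |ql (P.map Y1) u - ql (P.map Y2) u| :=
          lintegral_mono_set (Set.Ioo_subset_Ioo hp0.le le_rfl)
      _ ≤ ∫⁻ x, ENNReal.ofReal |cdfR (P.map Y1) x - cdfR (P.map Y2) x| :=
          lintegral_abs_ql_le _ _
      _ ≤ ∫⁻ ω, ENNReal.ofReal |Y1 ω - Y2 ω| ∂P := lintegral_abs_cdfR_le P h1m h2m
      _ = ENNReal.ofReal (∫ ω, |Y1 ω - Y2 ω| ∂P) :=
          (ofReal_integral_eq_lintegral_ofReal (h1i.sub h2i).abs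
            (ae_of_all _ fun ω => abs_nonneg _)).symm
  calc (∫⁻ u in Set.Ioo p 1, ENNReal.ofReal |ql (P.map Y1) u - ql (P.map Y2) u|).toReal
      ≤ (ENNReal.ofReal (∫ ω, |Y1 ω - Y2 ω| ∂P)).toReal :=
        ENNReal.toReal_mono ENNReal.ofReal_ne_top hchain
    _ = ∫ ω, |Y1 ω - Y2 ω| ∂P := ENNReal.toReal_ofReal (integral_nonneg fun ω => abs_nonneg _)

lemma min_sub_min_le (a b r : ℝ) : min a r - min b r ≤ |a - b| := by
  rcases le_total b r with h | h
  · rw [min_eq_left h]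
    linarith [min_le_left a r, le_abs_self (a - b)]
  · rw [min_eq_right h]
    linarith [min_le_right a r, abs_nonneg (a - b)]

lemma abs_min_sub_min (a b r : ℝ) : |min a r - min b r| ≤ |a - b| := by
  rw [abs_sub_le_iff]
  exact ⟨min_sub_min_le a b r, (min_sub_min_le b a r).trans (le_of_eq (abs_sub_comm b a))⟩

lemma g_between {γ : ℝ → ℝ} {c r l : ℝ} (hl0 : 0 ≤ l) (hl1 : l ≤ 1) {g : ℝ → ℝ}
    (hg : ∀ x, g x = if c < γ x then x
        else if γ x < c then min x r
        else (1 - l) * x + l * min x r)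
    (x : ℝ) : min x r ≤ g x ∧ g x ≤ x := by
  rw [hg x]
  split_ifs with h1 h2
  · exact ⟨min_le_left x r, le_refl x⟩
  · exact ⟨le_refl _, min_le_left x r⟩
  · constructor <;> nlinarith [min_le_left x r]

lemma g_key_bound {γ : ℝ → ℝ} {c r l : ℝ} (hl0 : 0 ≤ l) (hl1 : l ≤ 1) {g : ℝ → ℝ}
    (hg : ∀ x, g x = if c < γ x then x
        else if γ x < c then min x r
        else (1 - l) * x + l * min x r)
    (a b : ℝ) :
    |g a - g b| ≤ 2 * |a - b| +
      (if |γ b - c| ≤ |γ a - γ b| then 2 * max (b - r) 0 else 0) := by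
  split_ifs with hcase
  · obtain ⟨ha1, ha2⟩ := g_between hl0 hl1 hg a
    obtain ⟨hb1, hb2⟩ := g_between hl0 hl1 hg b
    have hae : a - min a r = max (a - r) 0 := by
      rcases le_total a r with h | h
      · rw [min_eq_left h, max_eq_right (by linarith)]
        ring
      · rw [min_eq_right h, max_eq_left (by linarith)]
    have hbe : b - min b r = max (b - r) 0 := by
      rcases le_total b r with h | h
      · rw [min_eq_left h, max_eq_right (by linarith)]
        ring
      · rw [min_eq_right h, max_eq_left (by linarith)]
    have hmm : max (a - r) 0 ≤ max (b - r) 0 + |a - b| := by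
      apply max_le
      · linarith [le_max_left (b - r) 0, le_abs_self (a - b)]
      · linarith [le_max_right (b - r) 0, abs_nonneg (a - b)]
    rw [abs_sub_le_iff]
    constructor
    · linarith [le_abs_self (a - b), abs_nonneg (a - b)]
    · linarith [neg_abs_le (a - b), abs_nonneg (a - b)]
  · push_neg at hcase
    have hbc : γ b ≠ c := by
      intro h
      rw [h, sub_self, abs_zero] at hcase
      exact absurd hcase (not_lt.2 (abs_nonneg _))
    rcases lt_or_gt_of_ne hbc with hlt | hgt
    · have habs : |γ b - c| = c - γ b := by
        rw [abs_of_neg (by linarith : γ b - c < 0)]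
        ring
      have ha : γ a < c := by
        have h1 := le_abs_self (γ a - γ b)
        linarith
      rw [hg a, hg b, if_neg (not_lt.2 ha.le), if_pos ha, if_neg (not_lt.2 hlt.le), if_pos hlt]
      have := abs_min_sub_min a b r
      linarith [abs_nonneg (a - b)]
    · have habs : |γ b - c| = γ b - c := abs_of_pos (by linarith : 0 < γ b - c)
      have ha : c < γ a := by
        have h1 := neg_abs_le (γ a - γ b)
        linarith
      rw [hg a, hg b, if_pos ha, if_pos hgt]
      linarith [abs_nonneg (a - b)]

theorem stmt15 {Ω : Type*} [MeasurableSpace Ω] (P : Measure Ω) [IsProbabilityMeasure P]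
    (hPatomless : Atomless P)
    (X : Ω → ℝ) (hXmeas : Measurable X) (hXint : Integrable X P)
    (γ : ℝ → ℝ) (hγcont : Continuous γ) (hγpos : ∀ x, 0 < γ x)
    (hγXatomless : ∀ c : ℝ, P {ω | γ (X ω) = c} = 0)
    (p : ℝ) (hp : p ∈ Set.Ioo (0 : ℝ) 1)
    (c : ℝ) (hc : 0 < c) (r : ℝ) (hr : 0 ≤ r) (l : ℝ) (hl : l ∈ Set.Icc (0 : ℝ) 1)
    (g : ℝ → ℝ)
    (hg : ∀ x, g x = if c < γ x then x
        else if γ x < c then min x r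
        else (1 - l) * x + l * min x r)
    (Z : ℕ → Ω → ℝ) (hZmeas : ∀ n, Measurable (Z n)) (hZint : ∀ n, Integrable (Z n) P)
    (hZconv : Tendsto (fun n => ∫ ω, |Z n ω - X ω| ∂P) atTop (𝓝 0)) :
    Tendsto (fun n => ∫ ω, |g (Z n ω) - g (X ω)| ∂P) atTop (𝓝 0) ∧
    Tendsto (fun n => ES P p (fun ω => g (Z n ω))) atTop (𝓝 (ES P p (fun ω => g (X ω)))) := by
  obtain ⟨hp0, hp1⟩ := hp
  obtain ⟨hl0, hl1⟩ := hl
  have hgeq : g = fun x => if c < γ x then x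
      else if γ x < c then min x r else (1 - l) * x + l * min x r := funext hg
  have hgmeas : Measurable g := by
    rw [hgeq]
    exact Measurable.ite (measurableSet_lt measurable_const hγcont.measurable) measurable_id
      (Measurable.ite (measurableSet_lt hγcont.measurable measurable_const)
        (measurable_id.min measurable_const)
        ((measurable_const.mul measurable_id).add
          (measurable_const.mul (measurable_id.min measurable_const))))
  have habs_g : ∀ x : ℝ, |g x| ≤ |x| + |r| := by
    intro x
    obtain ⟨h1, h2⟩ := g_between hl0 hl1 hg x
    have hmin : -(|x| + |r|) ≤ min x r :=
      le_min (by linarith [neg_abs_le x, abs_nonneg r]) (by linarith [neg_abs_le r, abs_nonneg x])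
    apply abs_le.2
    constructor
    · linarith
    · linarith [le_abs_self x, abs_nonneg r]
  have hgint : ∀ {W : Ω → ℝ}, Measurable W → Integrable W P →
      Integrable (fun ω => g (W ω)) P := by
    intro W hWm hWi
    apply Integrable.mono' (hWi.abs.add (integrable_const |r|))
      ((hgmeas.comp hWm).aestronglyMeasurable)
    exact ae_of_all _ fun ω => by simpa [Real.norm_eq_abs] using habs_g (W ω)
  have hDint : ∀ n, Integrable (fun ω => |Z n ω - X ω|) P := fun n => ((hZint n).sub hXint).abs
  set F : ℕ → Ω → ℝ := fun n ω =>
    if |γ (X ω) - c| ≤ |γ (Z n ω) - γ (X ω)| then 2 * max (X ω - r) 0 else 0 with hF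
  have hmax_int : Integrable (fun ω => 2 * max (X ω - r) 0) P :=
    ((hXint.sub (integrable_const r)).pos_part).const_mul 2
  have hFmeas : ∀ n, Measurable (F n) := by
    intro n
    apply Measurable.ite
    · exact measurableSet_le (((hγcont.measurable.comp hXmeas).sub measurable_const).abs)
        (((hγcont.measurable.comp (hZmeas n)).sub (hγcont.measurable.comp hXmeas)).abs)
    · exact ((hXmeas.sub measurable_const).max measurable_const).const_mul 2
    · exact measurable_const
  have hFbound : ∀ n ω, |F n ω| ≤ 2 * max (X ω - r) 0 := by
    intro n ω
    simp only [hF]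
    split_ifs with h
    · rw [abs_of_nonneg (by positivity)]
    · rw [abs_zero]
      positivity
  have hFint : ∀ n, Integrable (F n) P := fun n =>
    hmax_int.mono' (hFmeas n).aestronglyMeasurable
      (ae_of_all _ fun ω => by simpa [Real.norm_eq_abs] using hFbound n ω)
  have hae_ne : ∀ᵐ ω ∂P, γ (X ω) ≠ c := by
    rw [ae_iff]
    simp only [ne_eq, not_not]
    exact hγXatomless c
  have hT : Tendsto (fun n => ∫ ω, F n ω ∂P) atTop (𝓝 0) := by
    apply Filter.tendsto_of_subseq_tendsto
    intro ns hns
    have hmeas_conv : TendstoInMeasure P (fun k => Z (ns k)) atTop X := by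
      apply tendstoInMeasure_of_tendsto_eLpNorm (p := 1) one_ne_zero
        (fun k => (hZmeas _).aestronglyMeasurable) hXmeas.aestronglyMeasurable
      have heq : ∀ k, eLpNorm (Z (ns k) - X) 1 P
          = ENNReal.ofReal (∫ ω, |Z (ns k) ω - X ω| ∂P) := by
        intro k
        rw [eLpNorm_one_eq_lintegral_enorm,
          ofReal_integral_eq_lintegral_ofReal (hDint (ns k)) (ae_of_all _ fun ω => abs_nonneg _)]
        apply lintegral_congr
        intro ω
        rw [Pi.sub_apply, Real.enorm_eq_ofReal_abs]
      rw [show (fun k => eLpNorm (Z (ns k) - X) 1 P)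
          = fun k => ENNReal.ofReal (∫ ω, |Z (ns k) ω - X ω| ∂P) from funext heq]
      have h0 : Tendsto (fun k => ∫ ω, |Z (ns k) ω - X ω| ∂P) atTop (𝓝 0) := hZconv.comp hns
      simpa using ENNReal.tendsto_ofReal h0
    obtain ⟨φ, hφmono, hae⟩ := hmeas_conv.exists_seq_tendsto_ae
    refine ⟨φ, ?_⟩
    have hlim : ∀ᵐ ω ∂P, Tendsto (fun k => F (ns (φ k)) ω) atTop (𝓝 0) := by
      filter_upwards [hae, hae_ne] with ω h1 h2
      have hγt : Tendsto (fun k => γ (Z (ns (φ k)) ω)) atTop (𝓝 (γ (X ω))) :=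
        (hγcont.tendsto _).comp h1
      have habs0 : Tendsto (fun k => |γ (Z (ns (φ k)) ω) - γ (X ω)|) atTop (𝓝 0) := by
        have := (hγt.sub (tendsto_const_nhds (x := γ (X ω)))).abs
        simpa using this
      have hev := habs0.eventually_lt_const (abs_pos.2 (sub_ne_zero.2 h2))
      apply tendsto_const_nhds.congr'
      filter_upwards [hev] with k hk
      simp only [hF]
      rw [if_neg (not_le.2 hk)]
    have hdom := tendsto_integral_of_dominated_convergence (μ := P)
      (F := fun k => F (ns (φ k))) (f := fun _ => (0:ℝ)) (fun ω => 2 * max (X ω - r) 0)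
      (fun k => (hFmeas _).aestronglyMeasurable) hmax_int
      (fun k => ae_of_all _ fun ω => by simpa [Real.norm_eq_abs] using hFbound (ns (φ k)) ω)
      hlim
    simpa using hdom
  have hkey : ∀ n, ∫ ω, |g (Z n ω) - g (X ω)| ∂P
      ≤ 2 * (∫ ω, |Z n ω - X ω| ∂P) + ∫ ω, F n ω ∂P := by
    intro n
    have hpt : ∀ ω, |g (Z n ω) - g (X ω)| ≤ 2 * |Z n ω - X ω| + F n ω := by
      intro ω
      simp only [hF]
      exact g_key_bound hl0 hl1 hg (Z n ω) (X ω)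
    calc ∫ ω, |g (Z n ω) - g (X ω)| ∂P
        ≤ ∫ ω, (2 * |Z n ω - X ω| + F n ω) ∂P :=
          integral_mono (((hgint (hZmeas n) (hZint n)).sub (hgint hXmeas hXint)).abs)
            (((hDint n).const_mul 2).add (hFint n)) hpt
      _ = 2 * (∫ ω, |Z n ω - X ω| ∂P) + ∫ ω, F n ω ∂P := by
          rw [integral_add ((hDint n).const_mul 2) (hFint n), integral_const_mul]
  have hpart1 : Tendsto (fun n => ∫ ω, |g (Z n ω) - g (X ω)| ∂P) atTop (𝓝 0) := by
    have hb : Tendsto (fun n => 2 * (∫ ω, |Z n ω - X ω| ∂P) + ∫ ω, F n ω ∂P) atTop (𝓝 0) := by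
      have := (hZconv.const_mul 2).add hT
      simpa using this
    exact squeeze_zero (fun n => integral_nonneg fun ω => abs_nonneg _) hkey hb
  refine ⟨hpart1, ?_⟩
  have hESb : ∀ n, |ES P p (fun ω => g (Z n ω)) - ES P p (fun ω => g (X ω))|
      ≤ (1 - p)⁻¹ * ∫ ω, |g (Z n ω) - g (X ω)| ∂P := fun n =>
    abs_ES_sub_ES_le P (hgmeas.comp (hZmeas n)) (hgmeas.comp hXmeas)
      (hgint (hZmeas n) (hZint n)) (hgint hXmeas hXint) hp0 hp1
  rw [tendsto_iff_norm_sub_tendsto_zero]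
  apply squeeze_zero (fun n => norm_nonneg _)
    (fun n => by simpa [Real.norm_eq_abs] using hESb n)
  have := hpart1.const_mul ((1 - p)⁻¹)
  simpa using this
end

section
/- Let γ : ℝ → (0,∞) be continuous and suppose γ(X) has a continuous (atomless) distribution. Fix constants c > 0, m > 0, r ∈ [0,m], λ ∈ [r,m] and define g(x) := m·𝟙_{γ(x)>c} + r·𝟙_{γ(x)<c} + λ·𝟙_{γ(x)=c}. Then for every sequence (Z_n) of random variables converging to X in distribution, one has ES_p(g(Z_n)) → ES_p(g(X)); i.e. the map Z ↦ ES_p(g(Z)) is continuous at Z = X with respect to convergence in distribution. -/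
open MeasureTheory Filter
open scoped ENNReal Topology Classical

/-!
For a threshold payoff `Y = m·𝟙{W > c} + r·𝟙{W < c} + l·𝟙{W = c}` with `r ≤ l ≤ m`, the quantile
function `u ↦ VaR_u(Y)` is the step function `r + (l - r)·𝟙{u > b} + (m - l)·𝟙{u > s}` with
`b = ℙ(W < c)` and `s = ℙ(W ≤ c)`, so `ES_p(Y)` is an explicit continuous function of `(b, s)`.
For `W = γ(Z_n)` both events are preimages of sets whose frontier lies in `{γ = c}`, which is
null for the law of `X`; by the portmanteau theorem `b` and `s` converge along the sequence.
-/

section ConvergenceInDistribution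

variable {Ω E ι : Type*} [MeasurableSpace Ω] {P : Measure Ω} [IsProbabilityMeasure P]
  [MeasurableSpace E] [TopologicalSpace E] [OpensMeasurableSpace E] [HasOuterApproxClosed E]
  {L : Filter ι} {X : Ω → E} {Z : ι → Ω → E}

lemma tendsto_measure_preimage_of_tendsto_integral (hX : Measurable X)
    (hZ : ∀ i, Measurable (Z i))
    (hconv : ∀ f : BoundedContinuousFunction E ℝ,
      Tendsto (fun i => ∫ ω, f (Z i ω) ∂P) L (𝓝 (∫ ω, f (X ω) ∂P)))
    {S : Set E} (hS : MeasurableSet S) (hfr : P (X ⁻¹' frontier S) = 0) :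
    Tendsto (fun i => P (Z i ⁻¹' S)) L (𝓝 (P (X ⁻¹' S))) := by
  let μ : ProbabilityMeasure E := ⟨P.map X, Measure.isProbabilityMeasure_map hX.aemeasurable⟩
  let μs : ι → ProbabilityMeasure E :=
    fun i => ⟨P.map (Z i), Measure.isProbabilityMeasure_map (hZ i).aemeasurable⟩
  have hlim : Tendsto μs L (𝓝 μ) := by
    refine ProbabilityMeasure.tendsto_iff_forall_integral_tendsto.2 fun f => ?_
    have hmap : ∀ {Y : Ω → E}, Measurable Y → ∫ x, f x ∂(P.map Y) = ∫ ω, f (Y ω) ∂P :=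
      fun hY => integral_map hY.aemeasurable f.continuous.aestronglyMeasurable
    simpa only [μ, μs, ProbabilityMeasure.coe_mk, hmap hX, hmap (hZ _)] using hconv f
  have hfr' : (μ : Measure E) (frontier S) = 0 := by
    rwa [ProbabilityMeasure.coe_mk, Measure.map_apply hX isClosed_frontier.measurableSet]
  simpa only [μ, μs, ProbabilityMeasure.coe_mk, Measure.map_apply (hZ _) hS,
    Measure.map_apply hX hS] using
    ProbabilityMeasure.tendsto_measure_of_null_frontier_of_tendsto' hlim hfr'

end ConvergenceInDistribution

section ThresholdPayoff

variable {Ω : Type*} [MeasurableSpace Ω]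

lemma VaR_eq_of_le_of_forall_lt (P : Measure Ω) {Y : Ω → ℝ} {u a : ℝ}
    (ha : u ≤ (P {ω | Y ω ≤ a}).toReal) (hlt : ∀ x < a, (P {ω | Y ω ≤ x}).toReal < u) :
    VaR P u Y = a :=
  IsLeast.csInf_eq ⟨ha, fun x hx => not_lt.1 fun hxa => (hlt x hxa).not_ge hx⟩

lemma integral_indicator_Ioi_one {p q t : ℝ} (hpq : p ≤ q) (htq : t ≤ q) :
    ∫ u in p..q, (Set.Ioi t).indicator 1 u = q - max p t := by
  rw [intervalIntegral.integral_of_le hpq, integral_indicator_one measurableSet_Ioi,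
    measureReal_restrict_apply measurableSet_Ioi, Set.inter_comm, Set.Ioc_inter_Ioi,
    Real.volume_real_Ioc_of_le (max_le hpq htq)]

variable (P : Measure Ω) [IsProbabilityMeasure P] {W Y : Ω → ℝ} {c r l m : ℝ}

lemma VaR_eq_of_threshold (hrl : r ≤ l) (hlm : l ≤ m)
    (hY : ∀ ω, Y ω = if c < W ω then m else if W ω < c then r else l)
    {u : ℝ} (hu0 : 0 < u) (hu1 : u ≤ 1) :
    VaR P u Y = r + (l - r) * (Set.Ioi (P {ω | W ω < c}).toReal).indicator 1 u
      + (m - l) * (Set.Ioi (P {ω | W ω ≤ c}).toReal).indicator 1 u := by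
  set b := (P {ω | W ω < c}).toReal
  set s := (P {ω | W ω ≤ c}).toReal
  have hmono : ∀ {A B : Set Ω}, A ⊆ B → (P A).toReal ≤ (P B).toReal :=
    fun h => ENNReal.toReal_mono (measure_ne_top _ _) (measure_mono h)
  have hbs : b ≤ s := hmono fun ω (h : W ω < c) => h.le
  have hb_le : b ≤ (P {ω | Y ω ≤ r}).toReal :=
    hmono fun ω (h : W ω < c) => by simp [hY, h, h.not_gt]
  have hs_le : s ≤ (P {ω | Y ω ≤ l}).toReal :=
    hmono fun ω (h : W ω ≤ c) => by
      simp only [Set.mem_ofPred_eq, hY, if_neg h.not_gt]; split_ifs <;> linarith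
  have hlt_r : ∀ x < r, (P {ω | Y ω ≤ x}).toReal = 0 := fun x hx => by
    rw [show {ω | Y ω ≤ x} = ∅ from Set.eq_empty_of_forall_notMem fun ω (h : Y ω ≤ x) => by
      rw [hY] at h; split_ifs at h <;> linarith]
    simp
  have hlt_l : ∀ x < l, (P {ω | Y ω ≤ x}).toReal ≤ b := fun x hx =>
    hmono fun ω (h : Y ω ≤ x) => by
      rw [hY] at h; split_ifs at h with h₁ h₂ <;> first | exact h₂ | linarith
  have hlt_m : ∀ x < m, (P {ω | Y ω ≤ x}).toReal ≤ s := fun x hx =>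
    hmono fun ω (h : Y ω ≤ x) => by
      rw [hY] at h; split_ifs at h with h₁ <;> first | exact not_lt.1 h₁ | linarith
  rcases le_or_gt u b with hub | hbu
  · have hus : u ≤ s := hub.trans hbs
    rw [VaR_eq_of_le_of_forall_lt P (hub.trans hb_le) fun x hx => by rw [hlt_r x hx]; exact hu0]
    simp [Set.indicator_of_notMem, hub.not_gt, hus.not_gt]
  rcases le_or_gt u s with hus | hsu
  · rw [VaR_eq_of_le_of_forall_lt P (hus.trans hs_le) fun x hx => (hlt_l x hx).trans_lt hbu]
    simp [hbu, hus.not_gt]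
  · have hm_le : u ≤ (P {ω | Y ω ≤ m}).toReal := by
      rw [show {ω | Y ω ≤ m} = Set.univ from Set.eq_univ_of_forall fun ω => by
        simp only [Set.mem_ofPred_eq, hY]; split_ifs <;> linarith]
      simpa using hu1
    rw [VaR_eq_of_le_of_forall_lt P hm_le fun x hx => (hlt_m x hx).trans_lt hsu]
    simp [hbu, hsu]

lemma ES_eq_of_threshold (hrl : r ≤ l) (hlm : l ≤ m)
    (hY : ∀ ω, Y ω = if c < W ω then m else if W ω < c then r else l)
    {p : ℝ} (hp : p ∈ Set.Ioo (0 : ℝ) 1) :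
    ES P p Y = (1 - p)⁻¹ * ((1 - p) * r
      + (l - r) * (1 - max p (P {ω | W ω < c}).toReal)
      + (m - l) * (1 - max p (P {ω | W ω ≤ c}).toReal)) := by
  have hind : ∀ t : ℝ, IntervalIntegrable ((Set.Ioi t).indicator (1 : ℝ → ℝ)) volume p 1 :=
    fun _ => intervalIntegrable_iff.2 <|
      (integrableOn_const measure_Ioc_lt_top.ne).indicator measurableSet_Ioi
  have hle_one : ∀ A : Set Ω, (P A).toReal ≤ 1 := fun _ => measureReal_le_one
  have hVaR : ∫ u in p..1, VaR P u Y = ∫ u in p..1, (r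
      + (l - r) * (Set.Ioi (P {ω | W ω < c}).toReal).indicator 1 u
      + (m - l) * (Set.Ioi (P {ω | W ω ≤ c}).toReal).indicator 1 u) := by
    refine intervalIntegral.integral_congr fun u hu => ?_
    rw [Set.uIcc_of_le hp.2.le] at hu
    exact VaR_eq_of_threshold P hrl hlm hY (hp.1.trans_le hu.1) hu.2
  rw [ES, hVaR, intervalIntegral.integral_add (intervalIntegrable_const.add
      ((hind _).const_mul _)) ((hind _).const_mul _),
    intervalIntegral.integral_add intervalIntegrable_const ((hind _).const_mul _),
    intervalIntegral.integral_const_mul, intervalIntegral.integral_const_mul,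
    integral_indicator_Ioi_one hp.2.le (hle_one _),
    integral_indicator_Ioi_one hp.2.le (hle_one _), intervalIntegral.integral_const,
    smul_eq_mul]

end ThresholdPayoff

theorem stmt16_general {Ω : Type*} [MeasurableSpace Ω] (P : Measure Ω) [IsProbabilityMeasure P]
    (X : Ω → ℝ) (hXmeas : Measurable X)
    (γ : ℝ → ℝ) (hγcont : Continuous γ)
    (hγXatomless : ∀ c : ℝ, P {ω | γ (X ω) = c} = 0)
    (p : ℝ) (hp : p ∈ Set.Ioo (0 : ℝ) 1)
    (c : ℝ) (m : ℝ)
    (r : ℝ) (l : ℝ) (hl : l ∈ Set.Icc r m)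
    (g : ℝ → ℝ)
    (hg : ∀ x, g x = if c < γ x then m else if γ x < c then r else l)
    (Z : ℕ → Ω → ℝ) (hZmeas : ∀ n, Measurable (Z n))
    (hZconv : ∀ f : BoundedContinuousFunction ℝ ℝ,
      Tendsto (fun n => ∫ ω, f (Z n ω) ∂P) atTop (𝓝 (∫ ω, f (X ω) ∂P))) :
    Tendsto (fun n => ES P p (fun ω => g (Z n ω))) atTop (𝓝 (ES P p (fun ω => g (X ω)))) := by
  have hconv : ∀ S : Set ℝ, MeasurableSet S → frontier S ⊆ {x | γ x = c} →
      Tendsto (fun n => (P (Z n ⁻¹' S)).toReal) atTop (𝓝 (P (X ⁻¹' S)).toReal) :=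
    fun S hS hfr => (ENNReal.tendsto_toReal (measure_ne_top _ _)).comp <|
      tendsto_measure_preimage_of_tendsto_integral hXmeas hZmeas hZconv hS
        (measure_mono_null (Set.preimage_mono hfr) (hγXatomless c))
  have hb : Tendsto (fun n => (P {ω | γ (Z n ω) < c}).toReal) atTop
      (𝓝 (P {ω | γ (X ω) < c}).toReal) :=
    hconv _ (measurableSet_lt hγcont.measurable measurable_const)
      (frontier_lt_subset_eq hγcont continuous_const)
  have hs : Tendsto (fun n => (P {ω | γ (Z n ω) ≤ c}).toReal) atTop
      (𝓝 (P {ω | γ (X ω) ≤ c}).toReal) :=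
    hconv _ (measurableSet_le hγcont.measurable measurable_const)
      (frontier_le_subset_eq hγcont continuous_const)
  let F : ℝ × ℝ → ℝ := fun q =>
    (1 - p)⁻¹ * ((1 - p) * r + (l - r) * (1 - max p q.1) + (m - l) * (1 - max p q.2))
  have hES : ∀ Y : Ω → ℝ, ES P p (fun ω => g (Y ω)) =
      F ((P {ω | γ (Y ω) < c}).toReal, (P {ω | γ (Y ω) ≤ c}).toReal) :=
    fun Y => ES_eq_of_threshold P hl.1 hl.2 (fun ω => hg (Y ω)) hp
  simp only [hES]
  exact ((by fun_prop : Continuous F).tendsto _).comp (hb.prodMk_nhds hs)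

theorem stmt16 {Ω : Type*} [MeasurableSpace Ω] (P : Measure Ω) [IsProbabilityMeasure P]
    (hPatomless : Atomless P)
    (X : Ω → ℝ) (hXmeas : Measurable X)
    (γ : ℝ → ℝ) (hγcont : Continuous γ) (hγpos : ∀ x, 0 < γ x)
    (hγXatomless : ∀ c : ℝ, P {ω | γ (X ω) = c} = 0)
    (p : ℝ) (hp : p ∈ Set.Ioo (0 : ℝ) 1)
    (c : ℝ) (hc : 0 < c) (m : ℝ) (hm : 0 < m)
    (r : ℝ) (hr : r ∈ Set.Icc (0 : ℝ) m) (l : ℝ) (hl : l ∈ Set.Icc r m)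
    (g : ℝ → ℝ)
    (hg : ∀ x, g x = if c < γ x then m else if γ x < c then r else l)
    (Z : ℕ → Ω → ℝ) (hZmeas : ∀ n, Measurable (Z n))
    (hZconv : ∀ f : BoundedContinuousFunction ℝ ℝ,
      Tendsto (fun n => ∫ ω, f (Z n ω) ∂P) atTop (𝓝 (∫ ω, f (X ω) ∂P))) :
    Tendsto (fun n => ES P p (fun ω => g (Z n ω))) atTop (𝓝 (ES P p (fun ω => g (X ω)))) :=
  stmt16_general P X hXmeas γ hγcont hγXatomless p hp c m r l hl g hg Z hZmeas hZconv
end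

section
/- Let X be an essentially bounded random variable, ε > 0, and let A ⊂ ℝ be either a compact set or an interval. Define A_ε := {x ∈ ℝ : |x − y| ≤ ε for some y ∈ A}. Then A_ε is a Borel set and sup{ℙ(Y ∈ A) : Y essentially bounded, ‖Y − X‖_∞ ≤ ε} = ℙ(X ∈ A_ε); moreover this supremum is attained. -/
/-!
If `‖Y - X‖_∞ ≤ ε`, then almost surely `Y ∈ A` forces `X ∈ A_ε`, which bounds the supremum by
`ℙ(X ∈ A_ε)`. It is attained by `Y = φ(X)` for a measurable `φ` moving every point by at most `ε`
and sending `A_ε` into `A`: for closed `A`, a nearest-point map on `A_ε`; for an interval `A`, the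
map moving each point by at most `ε` towards a fixed point of `A`.
-/

open MeasureTheory Filter
open scoped ENNReal Topology Classical

open Metric Set Pointwise

section ShiftInto

variable {A : Set ℝ} {ε : ℝ}

theorem setOf_exists_abs_sub_le_eq_add (A : Set ℝ) (ε : ℝ) :
    {x : ℝ | ∃ y ∈ A, |x - y| ≤ ε} = A + Icc (-ε) ε := by
  ext x
  simp only [mem_ofPred_eq, Set.mem_add, mem_Icc, abs_le]
  constructor
  · rintro ⟨y, hy, h⟩
    exact ⟨y, hy, x - y, h, by ring⟩
  · rintro ⟨y, hy, t, ht, rfl⟩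
    exact ⟨y, hy, by simpa using ht⟩

theorem measurableSet_setOf_exists_abs_sub_le (hA : IsClosed A ∨ A.OrdConnected) :
    MeasurableSet {x : ℝ | ∃ y ∈ A, |x - y| ≤ ε} := by
  rw [setOf_exists_abs_sub_le_eq_add]
  rcases hA with hA | hA
  · exact (hA.add_right_of_isCompact isCompact_Icc).measurableSet
  · exact (convex_iff_ordConnected.1
      ((convex_iff_ordConnected.2 hA).add (convex_Icc _ _))).measurableSet

/-- A point of `A` nearest to `x` when `A` is closed and nonempty; `x` itself when `A = ∅`. -/
noncomputable def nearestPoint (A : Set ℝ) (x : ℝ) : ℝ :=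
  if x + infDist x A ∈ A then x + infDist x A else x - infDist x A

theorem abs_nearestPoint_sub (A : Set ℝ) (x : ℝ) : |nearestPoint A x - x| = infDist x A := by
  unfold nearestPoint
  split_ifs <;> simp [abs_of_nonneg infDist_nonneg]

theorem IsClosed.measurable_nearestPoint (hA : IsClosed A) : Measurable (nearestPoint A) := by
  have hd : Measurable (infDist · A) := (continuous_infDist_pt A).measurable
  exact Measurable.ite (hA.measurableSet.preimage (measurable_id.add hd))
    (measurable_id.add hd) (measurable_id.sub hd)

theorem IsClosed.nearestPoint_mem (hA : IsClosed A) (hne : A.Nonempty) (x : ℝ) :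
    nearestPoint A x ∈ A := by
  unfold nearestPoint
  split_ifs with h
  · exact h
  obtain ⟨z, hz, hxz⟩ := hA.exists_infDist_eq_dist hne x
  rw [hxz, Real.dist_eq] at h ⊢
  rcases abs_cases (x - z) with ⟨habs, -⟩ | ⟨habs, -⟩
  · simpa [habs] using hz
  · exact absurd (by simpa [habs] using hz) h

theorem IsClosed.exists_measurable_shift_into (hA : IsClosed A) (hε : 0 ≤ ε) :
    ∃ φ : ℝ → ℝ, Measurable φ ∧ (∀ x, |φ x - x| ≤ ε) ∧
      ∀ x, (∃ y ∈ A, |x - y| ≤ ε) → φ x ∈ A := by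
  refine ⟨fun x => if infDist x A ≤ ε then nearestPoint A x else x,
    Measurable.ite (measurableSet_le (continuous_infDist_pt A).measurable measurable_const)
      hA.measurable_nearestPoint measurable_id, fun x => ?_, ?_⟩
  · dsimp only
    split_ifs with h
    · rwa [abs_nearestPoint_sub]
    · simpa using hε
  · rintro x ⟨y, hy, hxy⟩
    have hd : infDist x A ≤ ε := (infDist_le_dist_of_mem hy).trans (by rwa [Real.dist_eq])
    simpa only [if_pos hd] using hA.nearestPoint_mem ⟨y, hy⟩ x

theorem Set.OrdConnected.exists_measurable_shift_into (hA : A.OrdConnected) (hε : 0 ≤ ε) :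
    ∃ φ : ℝ → ℝ, Measurable φ ∧ (∀ x, |φ x - x| ≤ ε) ∧
      ∀ x, (∃ y ∈ A, |x - y| ≤ ε) → φ x ∈ A := by
  rcases A.eq_empty_or_nonempty with rfl | ⟨a, ha⟩
  · exact ⟨id, measurable_id, by simpa using hε, by simp⟩
  refine ⟨fun x => x + max (-ε) (min ε (a - x)), by fun_prop, fun x => ?_, ?_⟩
  · rw [add_sub_cancel_left, abs_le]
    exact ⟨le_max_left _ _, max_le (by linarith) (min_le_left _ _)⟩
  · rintro x ⟨y, hy, hxy⟩
    rw [abs_le] at hxy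
    refine hA.uIcc_subset hy ha ⟨?_, ?_⟩ <;>
      simp only [min_def, max_def] <;> split_ifs <;> linarith

theorem exists_measurable_shift_into (hA : IsClosed A ∨ A.OrdConnected) (hε : 0 ≤ ε) :
    ∃ φ : ℝ → ℝ, Measurable φ ∧ (∀ x, |φ x - x| ≤ ε) ∧
      ∀ x, (∃ y ∈ A, |x - y| ≤ ε) → φ x ∈ A :=
  hA.elim (·.exists_measurable_shift_into hε) (·.exists_measurable_shift_into hε)

end ShiftInto

section EssSupBall

variable {Ω : Type*} [MeasurableSpace Ω] {P : Measure Ω} {ε : ℝ}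

theorem eLpNorm_top_le_ofReal_iff {f : Ω → ℝ} (hε : 0 ≤ ε) :
    eLpNorm f ⊤ P ≤ ENNReal.ofReal ε ↔ ∀ᵐ ω ∂P, |f ω| ≤ ε := by
  rw [eLpNorm_exponent_top]
  refine ⟨fun h => ?_, fun h => eLpNormEssSup_le_of_ae_bound h⟩
  filter_upwards [ae_le_eLpNormEssSup (f := f) (μ := P)] with ω hω
  rw [← ENNReal.ofReal_le_ofReal_iff hε, ← Real.enorm_eq_ofReal_abs]
  exact hω.trans h

theorem measure_mem_le_of_eLpNorm_sub_le {X Y : Ω → ℝ} (A : Set ℝ) (hε : 0 ≤ ε)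
    (hXY : eLpNorm (fun ω => Y ω - X ω) ⊤ P ≤ ENNReal.ofReal ε) :
    P {ω | Y ω ∈ A} ≤ P {ω | X ω ∈ {x : ℝ | ∃ y ∈ A, |x - y| ≤ ε}} := by
  refine measure_mono_ae ?_
  filter_upwards [(eLpNorm_top_le_ofReal_iff hε).1 hXY] with ω hω hY
  exact ⟨Y ω, hY, by rwa [abs_sub_comm]⟩

end EssSupBall

theorem stmt17_general {Ω : Type*} [MeasurableSpace Ω] (P : Measure Ω) [IsProbabilityMeasure P]
    (X : Ω → ℝ) (hXmeas : Measurable X) (hXbdd : MemLp X ⊤ P)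
    (ε : ℝ) (hε : 0 < ε)
    (A : Set ℝ) (hA : IsCompact A ∨ A.OrdConnected) :
    MeasurableSet {x : ℝ | ∃ y ∈ A, |x - y| ≤ ε} ∧
    IsGreatest
      {v : ℝ | ∃ Y : Ω → ℝ, Measurable Y ∧ MemLp Y ⊤ P ∧
        eLpNorm (fun ω => Y ω - X ω) ⊤ P ≤ ENNReal.ofReal ε ∧
        v = (P {ω | Y ω ∈ A}).toReal}
      ((P {ω | X ω ∈ {x : ℝ | ∃ y ∈ A, |x - y| ≤ ε}}).toReal) := by
  have hA' : IsClosed A ∨ A.OrdConnected := hA.imp IsCompact.isClosed id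
  obtain ⟨φ, hφ, hφε, hφA⟩ := exists_measurable_shift_into hA' hε.le
  have hφX : ∀ᵐ ω ∂P, |φ (X ω) - X ω| ≤ ε := ae_of_all _ fun ω => hφε (X ω)
  have hφXε := (eLpNorm_top_le_ofReal_iff hε.le).2 hφX
  refine ⟨measurableSet_setOf_exists_abs_sub_le hA', ⟨fun ω => φ (X ω), hφ.comp hXmeas, ?_,
    hφXε, ?_⟩, ?_⟩
  · convert hXbdd.add (memLp_top_of_bound
      ((hφ.comp hXmeas).sub hXmeas).aestronglyMeasurable ε hφX) using 1
    ext ω; simp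
  · exact congrArg ENNReal.toReal <| le_antisymm (measure_mono fun ω => hφA (X ω))
      (measure_mem_le_of_eLpNorm_sub_le A hε.le hφXε)
  · rintro _ ⟨Y, -, -, hY, rfl⟩
    exact ENNReal.toReal_mono (measure_ne_top _ _) (measure_mem_le_of_eLpNorm_sub_le A hε.le hY)

theorem stmt17 {Ω : Type*} [MeasurableSpace Ω] (P : Measure Ω) [IsProbabilityMeasure P]
    (hPatomless : Atomless P)
    (X : Ω → ℝ) (hXmeas : Measurable X) (hXbdd : MemLp X ⊤ P)
    (ε : ℝ) (hε : 0 < ε)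
    (A : Set ℝ) (hA : IsCompact A ∨ A.OrdConnected) :
    MeasurableSet {x : ℝ | ∃ y ∈ A, |x - y| ≤ ε} ∧
    IsGreatest
      {v : ℝ | ∃ Y : Ω → ℝ, Measurable Y ∧ MemLp Y ⊤ P ∧
        eLpNorm (fun ω => Y ω - X ω) ⊤ P ≤ ENNReal.ofReal ε ∧
        v = (P {ω | Y ω ∈ A}).toReal}
      ((P {ω | X ω ∈ {x : ℝ | ∃ y ∈ A, |x - y| ≤ ε}}).toReal) :=
  stmt17_general P X hXmeas hXbdd ε hε A hA
end
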